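/- arXiv:1602.00493 — 2 statements merged into one kernel-verified Lean document; each statement's English description precedes it below -/
import Mathlib

section
/- If all entries p_{i,n} of the matrix P are nonnegative, then F is monotone nondecreasing on [0,1]; if all entries are strictly positive, then F is strictly increasing on [0,1]. -/
open Finset Filter Topology MeasureTheory

noncomputable section

/-- `rowSum p n k = Σ_{i<k} p_{i,n}` (the numbers `β_{k,n}`). -/
def rowSum (p : ℕ → ℕ → ℝ) (n k : ℕ) : ℝ := ∑ i ∈ Finset.range k, p n i

/-- Index flip at even positions: `tw m f n i = f n i` for odd `n`, `f n (m n - i)` for even `n`. -/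
def tw (m : ℕ → ℕ) (f : ℕ → ℕ → ℝ) (n i : ℕ) : ℝ :=
  if Odd n then f n i else f n (m n - i)

/-- Tail value of the (nega-)expansion determined by `f` from position `k+1` on. -/
def negaShift (m : ℕ → ℕ) (f : ℕ → ℕ → ℝ) (d : ℕ → ℕ) (k : ℕ) : ℝ :=
  ∑' j : ℕ, tw m (rowSum f) (k + j + 1) (d (k + j + 1)) *
    ∏ t ∈ Finset.Icc (k + 1) (k + j), tw m f t (d t)

/-- The nega-expansion value: `negaVal m f d = β̃_{d₁,1} + Σ_{k≥2} β̃_{d_k,k} Π_{j<k} f̃_{d_j,j}`. -/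
def negaVal (m : ℕ → ℕ) (f : ℕ → ℕ → ℝ) (d : ℕ → ℕ) : ℝ := negaShift m f d 0

/-- A digit sequence for the alphabet sizes `m`. -/
def ValidDigits (m : ℕ → ℕ) (d : ℕ → ℕ) : Prop := ∀ n, d n ≤ m n

/-! Reversing the digits at even positions turns both nega-expansions into ordinary expansions
`β_{c₁,1} + f_{c₁,1} (β_{c₂,2} + f_{c₂,2} (⋯))` with one and the same digit sequence `c`.
With nonnegative rows such an expansion is monotone in the lexicographic order of `c`, so
`x < y` forces the digits of `x` to precede those of `y`, whence `F x ≤ F y`. With positive rows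
the only lexicographically distinct sequences of equal value are the adjacent pairs
`…, i, m, m, m, …` and `…, i + 1, 0, 0, 0, …`; as these also have equal value for `Q̃`, they never
represent `x < y`. -/

/-- The maps `x ↦ B n + a n * x` send `[0, 1]` into itself and preserve order. -/
def Admissible (B a : ℕ → ℝ) : Prop := ∀ n, 0 ≤ B n ∧ 0 ≤ a n ∧ B n + a n ≤ 1

/-- The value `B (k+1) + a (k+1) * (B (k+2) + a (k+2) * (⋯))` of the composed affine maps
`x ↦ B n + a n * x`, `n > k`. -/
def tailValue (B a : ℕ → ℝ) (k : ℕ) : ℝ :=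
  ∑' j : ℕ, B (k + j + 1) * ∏ t ∈ Ioc k (k + j), a t

section TailValue

variable {B a B' a' : ℕ → ℝ}

lemma Admissible.prod_nonneg (h : Admissible B a) (s : Finset ℕ) : 0 ≤ ∏ t ∈ s, a t :=
  Finset.prod_nonneg fun t _ => (h t).2.1

lemma tailValue_term_nonneg (h : Admissible B a) (k j : ℕ) :
    0 ≤ B (k + j + 1) * ∏ t ∈ Ioc k (k + j), a t :=
  mul_nonneg (h _).1 (h.prod_nonneg _)

lemma Admissible.sum_add_prod_le_one (h : Admissible B a) (k N : ℕ) :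
    ∑ j ∈ range N, B (k + j + 1) * ∏ t ∈ Ioc k (k + j), a t + ∏ t ∈ Ioc k (k + N), a t ≤ 1 := by
  induction N with
  | zero => simp
  | succ N ih =>
    rw [sum_range_succ, ← add_assoc k N 1, prod_Ioc_succ_top (by omega)]
    nlinarith [h.prod_nonneg (Ioc k (k + N)), (h (k + N + 1)).2.2]

lemma Admissible.sum_le_one (h : Admissible B a) (k N : ℕ) :
    ∑ j ∈ range N, B (k + j + 1) * ∏ t ∈ Ioc k (k + j), a t ≤ 1 := by
  linarith [h.sum_add_prod_le_one k N, h.prod_nonneg (Ioc k (k + N))]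

lemma tailValue_summable (h : Admissible B a) (k : ℕ) :
    Summable fun j => B (k + j + 1) * ∏ t ∈ Ioc k (k + j), a t :=
  summable_of_sum_range_le (tailValue_term_nonneg h k) (h.sum_le_one k)

lemma tailValue_nonneg (h : Admissible B a) (k : ℕ) : 0 ≤ tailValue B a k :=
  tsum_nonneg (tailValue_term_nonneg h k)

lemma tailValue_le_one (h : Admissible B a) (k : ℕ) : tailValue B a k ≤ 1 :=
  (tailValue_summable h k).tsum_le_of_sum_range_le (h.sum_le_one k)

lemma tailValue_eq_sum_add_prod_mul (h : Admissible B a) (k N : ℕ) :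
    tailValue B a k = ∑ j ∈ range N, B (k + j + 1) * ∏ t ∈ Ioc k (k + j), a t
      + (∏ t ∈ Ioc k (k + N), a t) * tailValue B a (k + N) := by
  rw [tailValue, ← (tailValue_summable h k).sum_add_tsum_nat_add N, tailValue, ← tsum_mul_left]
  congr 1
  refine tsum_congr fun j => ?_
  rw [show k + (j + N) = k + N + j by ring,
    ← prod_Ioc_consecutive a (Nat.le_add_right k N) (Nat.le_add_right _ j)]
  ring

lemma tailValue_eq_add_mul (h : Admissible B a) (k : ℕ) :
    tailValue B a k = B (k + 1) + a (k + 1) * tailValue B a (k + 1) := by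
  simpa using tailValue_eq_sum_add_prod_mul h k 1

lemma tailValue_congr (k : ℕ) (hag : ∀ t, k < t → B' t = B t ∧ a' t = a t) :
    tailValue B' a' k = tailValue B a k := by
  refine tsum_congr fun j => ?_
  rw [(hag _ (by omega)).1, prod_congr rfl fun t ht => (hag t (mem_Ioc.1 ht).1).2]

lemma tailValue_sub_tailValue (h : Admissible B a) (h' : Admissible B' a') (k N : ℕ)
    (hag : ∀ t ∈ Ioc k (k + N), B' t = B t ∧ a' t = a t) :
    tailValue B' a' k - tailValue B a k =
      (∏ t ∈ Ioc k (k + N), a t) * (tailValue B' a' (k + N) - tailValue B a (k + N)) := by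
  have hsum : ∑ j ∈ range N, B' (k + j + 1) * ∏ t ∈ Ioc k (k + j), a' t
      = ∑ j ∈ range N, B (k + j + 1) * ∏ t ∈ Ioc k (k + j), a t := by
    refine sum_congr rfl fun j hj => ?_
    have hjN := mem_range.1 hj
    rw [(hag _ (by simp; omega)).1,
      prod_congr rfl fun t ht => (hag t (by simp at ht ⊢; omega)).2]
  have hprod : ∏ t ∈ Ioc k (k + N), a' t = ∏ t ∈ Ioc k (k + N), a t :=
    prod_congr rfl fun t ht => (hag t ht).2
  rw [tailValue_eq_sum_add_prod_mul h k N, tailValue_eq_sum_add_prod_mul h' k N, hsum, hprod]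
  ring

lemma tailValue_eq_zero (k : ℕ) (hB : ∀ t, k < t → B t = 0) : tailValue B a k = 0 := by
  refine (tsum_congr fun j => ?_).trans tsum_zero
  rw [hB _ (by omega), zero_mul]

lemma tailValue_eq_one (h : Admissible B a) (k : ℕ) (hB : ∀ t, k < t → B t + a t = 1)
    (ha : Tendsto (fun N => ∏ t ∈ Ioc k (k + N), a t) atTop (𝓝 0)) : tailValue B a k = 1 := by
  have hsum : ∀ N, ∑ j ∈ range N, B (k + j + 1) * ∏ t ∈ Ioc k (k + j), a t
      = 1 - ∏ t ∈ Ioc k (k + N), a t := by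
    intro N
    induction N with
    | zero => simp
    | succ N ih =>
      rw [sum_range_succ, ih, ← add_assoc k N 1, prod_Ioc_succ_top (by omega),
        eq_sub_of_add_eq (hB _ (by omega))]
      ring
  refine tendsto_nhds_unique (tailValue_summable h k).hasSum.tendsto_sum_nat ?_
  simp_rw [hsum]
  simpa using tendsto_const_nhds.sub ha

lemma tailValue_lt_one (h : Admissible B a) (ha : ∀ t, 0 < a t) (k N : ℕ)
    (hlt : B (k + N + 1) + a (k + N + 1) < 1) : tailValue B a k < 1 := by
  have hP : 0 < ∏ t ∈ Ioc k (k + N), a t := prod_pos fun t _ => ha t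
  have hN : tailValue B a (k + N) < 1 := by
    rw [tailValue_eq_add_mul h]
    nlinarith [tailValue_le_one h (k + N + 1), ha (k + N + 1)]
  rw [tailValue_eq_sum_add_prod_mul h k N]
  nlinarith [h.sum_add_prod_le_one k N]

lemma tailValue_pos (h : Admissible B a) (ha : ∀ t, 0 < a t) (k N : ℕ)
    (hB : 0 < B (k + N + 1)) : 0 < tailValue B a k :=
  (mul_pos hB (prod_pos fun t _ => ha t)).trans_le
    ((tailValue_summable h k).le_tsum N fun j _ => tailValue_term_nonneg h k j)

lemma tendsto_prod_Ioc_add (a : ℕ → ℝ) (ha : ∀ t, a t ≠ 0)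
    (h : Tendsto (fun N => ∏ t ∈ Ioc 0 N, a t) atTop (𝓝 0)) (k : ℕ) :
    Tendsto (fun N => ∏ t ∈ Ioc k (k + N), a t) atTop (𝓝 0) := by
  have hsplit : ∀ N, ∏ t ∈ Ioc k (k + N), a t
      = (∏ t ∈ Ioc 0 (k + N), a t) / ∏ t ∈ Ioc 0 k, a t := fun N => by
    rw [eq_div_iff (prod_ne_zero_iff.2 fun t _ => ha t), mul_comm,
      prod_Ioc_consecutive a (Nat.zero_le k) (Nat.le_add_right k N)]
  have hk : Tendsto (fun N => k + N) atTop atTop := tendsto_atTop_mono (Nat.le_add_left · k) tendsto_id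
  simp_rw [hsplit]
  simpa using (h.comp hk).div_const _

end TailValue

def twistDigits (m d : ℕ → ℕ) (n : ℕ) : ℕ := if Odd n then d n else m n - d n

lemma validDigits_twistDigits {m d : ℕ → ℕ} (hd : ValidDigits m d) :
    ValidDigits m (twistDigits m d) := by
  intro n
  unfold twistDigits
  split
  · exact hd n
  · exact Nat.sub_le _ _

lemma tw_apply_digit (m : ℕ → ℕ) (g : ℕ → ℕ → ℝ) (d : ℕ → ℕ) (n : ℕ) :
    tw m g n (d n) = g n (twistDigits m d n) := by
  unfold tw twistDigits
  split <;> rfl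

/-- `digitValue f c 0 = β_{c₁,1} + Σ_{k≥2} β_{c_k,k} Π_{j<k} f_{c_j,j}`, without index flips. -/
def digitValue (f : ℕ → ℕ → ℝ) (c : ℕ → ℕ) : ℕ → ℝ :=
  tailValue (fun n => rowSum f n (c n)) (fun n => f n (c n))

lemma negaVal_eq_digitValue (m : ℕ → ℕ) (f : ℕ → ℕ → ℝ) (d : ℕ → ℕ) :
    negaVal m f d = digitValue f (twistDigits m d) 0 := by
  refine tsum_congr fun j => ?_
  rw [tw_apply_digit, Icc_add_one_left_eq_Ioc]
  exact congrArg _ (prod_congr rfl fun t _ => tw_apply_digit m f d t)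

lemma rowSum_succ (f : ℕ → ℕ → ℝ) (n k : ℕ) : rowSum f n (k + 1) = rowSum f n k + f n k :=
  sum_range_succ _ _

section Rows

variable {f : ℕ → ℕ → ℝ} {M n : ℕ}

lemma rowSum_mono (hf : ∀ i, i ≤ M → 0 ≤ f n i) {k k' : ℕ} (hk : k ≤ k') (hk' : k' ≤ M + 1) :
    rowSum f n k ≤ rowSum f n k' :=
  sum_le_sum_of_subset_of_nonneg (range_subset_range.2 hk) fun i hi _ =>
    hf i (by simp at hi; omega)

lemma rowSum_strictMono (hf : ∀ i, i ≤ M → 0 < f n i) {k k' : ℕ} (hk : k < k')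
    (hk' : k' ≤ M + 1) : rowSum f n k < rowSum f n k' :=
  sum_lt_sum_of_subset (range_subset_range.2 hk.le) (mem_range.2 hk) (by simp)
    (hf k (by omega)) fun j hj _ => (hf j (by simp at hj; omega)).le

lemma rowSum_add_mul_le (hf : ∀ i, i ≤ M → 0 ≤ f n i) {i i' : ℕ} (hi : i < i') (hi' : i' ≤ M)
    {S S' : ℝ} (hS : S ≤ 1) (hS' : 0 ≤ S') :
    rowSum f n i + f n i * S ≤ rowSum f n i' + f n i' * S' := by
  have h1 : f n i * S ≤ f n i := mul_le_of_le_one_right (hf i (by omega)) hS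
  have h2 : rowSum f n (i + 1) ≤ rowSum f n i' := rowSum_mono hf hi (by omega)
  rw [rowSum_succ] at h2
  nlinarith [hf i' hi']

lemma rowSum_add_mul_lt (hf : ∀ i, i ≤ M → 0 < f n i) {i i' : ℕ} (hi : i < i') (hi' : i' ≤ M)
    {S S' : ℝ} (hS : S ≤ 1) (hS' : 0 ≤ S') (h : S < 1 ∨ i + 1 < i' ∨ 0 < S') :
    rowSum f n i + f n i * S < rowSum f n i' + f n i' * S' := by
  have h1 : f n i * S ≤ f n i := mul_le_of_le_one_right (hf i (by omega)).le hS
  have h2 : rowSum f n (i + 1) ≤ rowSum f n i' := rowSum_mono (fun j hj => (hf j hj).le) hi (by omega)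
  have h3 : 0 ≤ f n i' * S' := mul_nonneg (hf i' hi').le hS'
  rw [rowSum_succ] at h2
  rcases h with h | h | h
  · nlinarith [mul_lt_of_lt_one_right (hf i (by omega)) h]
  · have := rowSum_strictMono hf h (by omega)
    rw [rowSum_succ] at this
    linarith
  · nlinarith [mul_pos (hf i' hi') h]

end Rows

/-- From position `n` on, `c` reads `i, m, m, m, …` and `c'` reads `i + 1, 0, 0, 0, …`: the two
expansions of one point. -/
def IsAdjacentAt (m c c' : ℕ → ℕ) (n : ℕ) : Prop :=
  c' n = c n + 1 ∧ (∀ t, n < t → c t = m t) ∧ ∀ t, n < t → c' t = 0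

section DigitValue

variable {m : ℕ → ℕ} {f : ℕ → ℕ → ℝ} {c c' : ℕ → ℕ}

lemma admissible_digits (hf : ∀ n i, i ≤ m n → 0 ≤ f n i)
    (hf1 : ∀ n, ∑ i ∈ range (m n + 1), f n i = 1) (hc : ValidDigits m c) :
    Admissible (fun n => rowSum f n (c n)) (fun n => f n (c n)) := fun n =>
  ⟨rowSum_mono (hf n) (Nat.zero_le _) (by have := hc n; omega), hf n _ (hc n), by
    rw [← rowSum_succ, ← hf1 n]
    exact rowSum_mono (hf n) (by have := hc n; omega) le_rfl⟩

lemma digitValue_eq_add_mul (hf : ∀ n i, i ≤ m n → 0 ≤ f n i)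
    (hf1 : ∀ n, ∑ i ∈ range (m n + 1), f n i = 1) (hc : ValidDigits m c) (k : ℕ) :
    digitValue f c k = rowSum f (k + 1) (c (k + 1)) + f (k + 1) (c (k + 1)) * digitValue f c (k + 1) :=
  tailValue_eq_add_mul (admissible_digits hf hf1 hc) k

lemma digitValue_congr (k : ℕ) (h : ∀ t, k < t → c t = c' t) :
    digitValue f c k = digitValue f c' k :=
  tailValue_congr k fun t ht => by simp [h t ht]

lemma digitValue_sub_digitValue (hf : ∀ n i, i ≤ m n → 0 ≤ f n i)
    (hf1 : ∀ n, ∑ i ∈ range (m n + 1), f n i = 1) (hc : ValidDigits m c) (hc' : ValidDigits m c')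
    (n : ℕ) (hag : ∀ t ∈ Ioc 0 n, c t = c' t) :
    digitValue f c' 0 - digitValue f c 0 =
      (∏ t ∈ Ioc 0 n, f t (c t)) * (digitValue f c' n - digitValue f c n) := by
  simpa only [digitValue, zero_add] using
    tailValue_sub_tailValue (admissible_digits hf hf1 hc) (admissible_digits hf hf1 hc') 0 n
      fun t ht => by simp [hag t (by simpa using ht)]

lemma digitValue_lt_one (hf : ∀ n i, i ≤ m n → 0 < f n i)
    (hf1 : ∀ n, ∑ i ∈ range (m n + 1), f n i = 1) (hc : ValidDigits m c) (k : ℕ)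
    (h : ∃ t, k < t ∧ c t < m t) : digitValue f c k < 1 := by
  obtain ⟨t, hkt, hct⟩ := h
  obtain ⟨N, rfl⟩ := Nat.exists_eq_add_of_lt hkt
  refine tailValue_lt_one (admissible_digits (fun n i hi => (hf n i hi).le) hf1 hc)
    (fun t => hf t _ (hc t)) k N ?_
  rw [← rowSum_succ, ← hf1 (k + N + 1)]
  exact rowSum_strictMono (hf _) (by omega) le_rfl

lemma digitValue_pos (hf : ∀ n i, i ≤ m n → 0 < f n i)
    (hf1 : ∀ n, ∑ i ∈ range (m n + 1), f n i = 1) (hc : ValidDigits m c) (k : ℕ)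
    (h : ∃ t, k < t ∧ 0 < c t) : 0 < digitValue f c k := by
  obtain ⟨t, hkt, hct⟩ := h
  obtain ⟨N, rfl⟩ := Nat.exists_eq_add_of_lt hkt
  refine tailValue_pos (admissible_digits (fun n i hi => (hf n i hi).le) hf1 hc)
    (fun t => hf t _ (hc t)) k N ?_
  simpa [rowSum] using rowSum_strictMono (hf _) hct (by have := hc (k + N + 1); omega)

lemma digitValue_eq_one (hf : ∀ n i, i ≤ m n → 0 ≤ f n i)
    (hf1 : ∀ n, ∑ i ∈ range (m n + 1), f n i = 1) (hc : ValidDigits m c) (k : ℕ)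
    (hmax : ∀ t, k < t → c t = m t)
    (hP : Tendsto (fun N => ∏ t ∈ Ioc k (k + N), f t (c t)) atTop (𝓝 0)) :
    digitValue f c k = 1 :=
  tailValue_eq_one (admissible_digits hf hf1 hc) k
    (fun t ht => by rw [hmax t ht, ← rowSum_succ]; exact hf1 t) hP

lemma digitValue_eq_zero (k : ℕ) (hzero : ∀ t, k < t → c t = 0) : digitValue f c k = 0 :=
  tailValue_eq_zero k fun t ht => by simp [hzero t ht, rowSum]

lemma digitValue_le_of_lex (hf : ∀ n i, i ≤ m n → 0 ≤ f n i)
    (hf1 : ∀ n, ∑ i ∈ range (m n + 1), f n i = 1) (hc : ValidDigits m c) (hc' : ValidDigits m c')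
    (n : ℕ) (hag : ∀ t ∈ Ioc 0 n, c t = c' t) (hlt : c (n + 1) < c' (n + 1)) :
    digitValue f c 0 ≤ digitValue f c' 0 := by
  have hstep : digitValue f c n ≤ digitValue f c' n := by
    rw [digitValue_eq_add_mul hf hf1 hc, digitValue_eq_add_mul hf hf1 hc']
    exact rowSum_add_mul_le (hf _) hlt (hc' _)
      (tailValue_le_one (admissible_digits hf hf1 hc) _)
      (tailValue_nonneg (admissible_digits hf hf1 hc') _)
  rw [← sub_nonneg, digitValue_sub_digitValue hf hf1 hc hc' n hag]
  exact mul_nonneg ((admissible_digits hf hf1 hc).prod_nonneg _) (sub_nonneg.2 hstep)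

lemma digitValue_lt_of_lex (hf : ∀ n i, i ≤ m n → 0 < f n i)
    (hf1 : ∀ n, ∑ i ∈ range (m n + 1), f n i = 1) (hc : ValidDigits m c) (hc' : ValidDigits m c')
    (n : ℕ) (hag : ∀ t ∈ Ioc 0 n, c t = c' t) (hlt : c (n + 1) < c' (n + 1))
    (hadj : ¬ IsAdjacentAt m c c' (n + 1)) :
    digitValue f c 0 < digitValue f c' 0 := by
  have hf₀ : ∀ n i, i ≤ m n → 0 ≤ f n i := fun n i hi => (hf n i hi).le
  have hstep : digitValue f c n < digitValue f c' n := by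
    rw [digitValue_eq_add_mul hf₀ hf1 hc, digitValue_eq_add_mul hf₀ hf1 hc']
    refine rowSum_add_mul_lt (hf _) hlt (hc' _)
      (tailValue_le_one (admissible_digits hf₀ hf1 hc) _)
      (tailValue_nonneg (admissible_digits hf₀ hf1 hc') _) ?_
    by_contra! h
    obtain ⟨hS, hnext, hS'⟩ := h
    refine hadj ⟨by omega, fun t ht => ?_, fun t ht => ?_⟩
    · by_contra hct
      exact hS.not_gt (digitValue_lt_one hf hf1 hc _ ⟨t, ht, lt_of_le_of_ne (hc t) hct⟩)
    · by_contra hct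
      exact hS'.not_gt (digitValue_pos hf hf1 hc' _ ⟨t, ht, Nat.pos_of_ne_zero hct⟩)
  rw [← sub_pos, digitValue_sub_digitValue hf₀ hf1 hc hc' n hag]
  exact mul_pos (prod_pos fun t _ => hf t _ (hc t)) (sub_pos.2 hstep)

lemma digitValue_eq_of_isAdjacentAt (hf : ∀ n i, i ≤ m n → 0 < f n i)
    (hf1 : ∀ n, ∑ i ∈ range (m n + 1), f n i = 1) (hc : ValidDigits m c) (hc' : ValidDigits m c')
    (hP : Tendsto (fun N => ∏ t ∈ Ioc 0 N, f t (c t)) atTop (𝓝 0))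
    (n : ℕ) (hag : ∀ t ∈ Ioc 0 n, c t = c' t) (hadj : IsAdjacentAt m c c' (n + 1)) :
    digitValue f c 0 = digitValue f c' 0 := by
  have hf₀ : ∀ n i, i ≤ m n → 0 ≤ f n i := fun n i hi => (hf n i hi).le
  obtain ⟨hnext, hmax, hzero⟩ := hadj
  have h1 : digitValue f c (n + 1) = 1 :=
    digitValue_eq_one hf₀ hf1 hc _ hmax
      (tendsto_prod_Ioc_add _ (fun t => (hf t _ (hc t)).ne') hP _)
  have hstep : digitValue f c n = digitValue f c' n := by
    rw [digitValue_eq_add_mul hf₀ hf1 hc, digitValue_eq_add_mul hf₀ hf1 hc', h1,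
      digitValue_eq_zero _ hzero, hnext, rowSum_succ]
    ring
  rw [eq_comm, ← sub_eq_zero, digitValue_sub_digitValue hf₀ hf1 hc hc' n hag, hstep, sub_self, mul_zero]

lemma exists_lex_of_digitValue_lt (hf : ∀ n i, i ≤ m n → 0 ≤ f n i)
    (hf1 : ∀ n, ∑ i ∈ range (m n + 1), f n i = 1) (hc : ValidDigits m c) (hc' : ValidDigits m c')
    (h : digitValue f c 0 < digitValue f c' 0) :
    ∃ n, (∀ t ∈ Ioc 0 n, c t = c' t) ∧ c (n + 1) < c' (n + 1) := by
  have hne : ∃ n, c (n + 1) ≠ c' (n + 1) := by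
    by_contra! hall
    refine h.ne (digitValue_congr 0 fun t ht => ?_)
    obtain ⟨s, rfl⟩ := Nat.exists_eq_add_of_lt ht
    simpa using hall s
  have hag : ∀ t ∈ Ioc 0 (Nat.find hne), c t = c' t := by
    intro t ht
    obtain ⟨s, rfl⟩ := Nat.exists_eq_add_of_lt (mem_Ioc.1 ht).1
    simpa using Nat.find_min hne (by have := (mem_Ioc.1 ht).2; omega)
  refine ⟨Nat.find hne, hag, (Nat.find_spec hne).lt_of_le ?_⟩
  by_contra! hgt
  exact h.not_ge (digitValue_le_of_lex hf hf1 hc' hc _ (fun t ht => (hag t ht).symm) hgt)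

end DigitValue

lemma digitValue_le_of_digitValue_lt {m : ℕ → ℕ} {q p : ℕ → ℕ → ℝ} {c c' : ℕ → ℕ}
    (hq : ∀ n i, i ≤ m n → 0 ≤ q n i) (hq1 : ∀ n, ∑ i ∈ range (m n + 1), q n i = 1)
    (hp : ∀ n i, i ≤ m n → 0 ≤ p n i) (hp1 : ∀ n, ∑ i ∈ range (m n + 1), p n i = 1)
    (hc : ValidDigits m c) (hc' : ValidDigits m c') (h : digitValue q c 0 < digitValue q c' 0) :
    digitValue p c 0 ≤ digitValue p c' 0 :=
  let ⟨n, hag, hlt⟩ := exists_lex_of_digitValue_lt hq hq1 hc hc' h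
  digitValue_le_of_lex hp hp1 hc hc' n hag hlt

lemma digitValue_lt_of_digitValue_lt {m : ℕ → ℕ} {q p : ℕ → ℕ → ℝ} {c c' : ℕ → ℕ}
    (hq : ∀ n i, i ≤ m n → 0 < q n i) (hq1 : ∀ n, ∑ i ∈ range (m n + 1), q n i = 1)
    (hqP : Tendsto (fun N => ∏ t ∈ Ioc 0 N, q t (c t)) atTop (𝓝 0))
    (hp : ∀ n i, i ≤ m n → 0 < p n i) (hp1 : ∀ n, ∑ i ∈ range (m n + 1), p n i = 1)
    (hc : ValidDigits m c) (hc' : ValidDigits m c') (h : digitValue q c 0 < digitValue q c' 0) :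
    digitValue p c 0 < digitValue p c' 0 := by
  obtain ⟨n, hag, hlt⟩ :=
    exists_lex_of_digitValue_lt (fun n i hi => (hq n i hi).le) hq1 hc hc' h
  exact digitValue_lt_of_lex hp hp1 hc hc' n hag hlt fun hadj =>
    h.ne (digitValue_eq_of_isAdjacentAt hq hq1 hc hc' hqP n hag hadj)

theorem stmt6_general (m : ℕ → ℕ) (q p : ℕ → ℕ → ℝ)
    (hq1 : ∀ n i, i ≤ m n → 0 < q n i)
    (hq2 : ∀ n, ∑ i ∈ Finset.range (m n + 1), q n i = 1)
    (hq4 : ∀ d, ValidDigits m d →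
      Tendsto (fun N => ∏ j ∈ Finset.Icc 1 N, q j (d j)) atTop (𝓝 0))
    (hp2 : ∀ n, ∑ i ∈ Finset.range (m n + 1), p n i = 1)
    (G : ℝ → ℝ)
    (hG : ∀ d, ValidDigits m d → G (negaVal m q d) = negaVal m p d)
    (hsurj : ∀ x ∈ Set.Icc (0 : ℝ) 1, ∃ d, ValidDigits m d ∧ x = negaVal m q d) :
    ((∀ n i, i ≤ m n → 0 ≤ p n i) → MonotoneOn G (Set.Icc (0 : ℝ) 1)) ∧
    ((∀ n i, i ≤ m n → 0 < p n i) → StrictMonoOn G (Set.Icc (0 : ℝ) 1)) := by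
  have hdigits : ∀ x ∈ Set.Icc (0 : ℝ) 1, ∃ c, ValidDigits m c ∧
      x = digitValue q c 0 ∧ G x = digitValue p c 0 := by
    intro x hx
    obtain ⟨d, hd, rfl⟩ := hsurj x hx
    exact ⟨twistDigits m d, validDigits_twistDigits hd, negaVal_eq_digitValue m q d,
      by rw [hG d hd, negaVal_eq_digitValue]⟩
  refine ⟨fun hp => monotoneOn_iff_forall_lt.2 fun x hx y hy hxy => ?_,
    fun hp x hx y hy hxy => ?_⟩ <;>
  obtain ⟨c, hc, rfl, hGx⟩ := hdigits x hx <;>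
  obtain ⟨c', hc', rfl, hGy⟩ := hdigits y hy <;>
  rw [hGx, hGy]
  · exact digitValue_le_of_digitValue_lt (fun n i hi => (hq1 n i hi).le) hq2 hp hp2 hc hc' hxy
  · have hqP : Tendsto (fun N => ∏ t ∈ Ioc 0 N, q t (c t)) atTop (𝓝 0) := by
      simpa only [← Icc_add_one_left_eq_Ioc, zero_add] using hq4 c hc
    exact digitValue_lt_of_digitValue_lt hq1 hq2 hqP hp hp2 hc hc' hxy

/-- if all `p_{i,n} ≥ 0` then `F` is nondecreasing on `[0,1]`;
if all `p_{i,n} > 0` then `F` is strictly increasing on `[0,1]`. -/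
theorem stmt6 (m : ℕ → ℕ) (q p : ℕ → ℕ → ℝ)
    (hq1 : ∀ n i, i ≤ m n → 0 < q n i)
    (hq2 : ∀ n, ∑ i ∈ Finset.range (m n + 1), q n i = 1)
    (hq4 : ∀ d, ValidDigits m d →
      Tendsto (fun N => ∏ j ∈ Finset.Icc 1 N, q j (d j)) atTop (𝓝 0))
    (hp1 : ∀ n i, i ≤ m n → p n i ∈ Set.Ioo (-1 : ℝ) 1)
    (hp2 : ∀ n, ∑ i ∈ Finset.range (m n + 1), p n i = 1)
    (hp3 : ∀ n k, 1 ≤ k → k ≤ m n → rowSum p n k ∈ Set.Ioo (0 : ℝ) 1)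
    (hp4 : ∀ d, ValidDigits m d →
      Tendsto (fun N => ∏ j ∈ Finset.Icc 1 N, |p j (d j)|) atTop (𝓝 0))
    (G : ℝ → ℝ)
    (hG : ∀ d, ValidDigits m d → G (negaVal m q d) = negaVal m p d)
    (hsurj : ∀ x ∈ Set.Icc (0 : ℝ) 1, ∃ d, ValidDigits m d ∧ x = negaVal m q d) :
    ((∀ n i, i ≤ m n → 0 ≤ p n i) → MonotoneOn G (Set.Icc (0 : ℝ) 1)) ∧
    ((∀ n i, i ≤ m n → 0 < p n i) → StrictMonoOn G (Set.Icc (0 : ℝ) 1)) :=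
  stmt6_general m q p hq1 hq2 hq4 hp2 G hG hsurj
end
end

section
/- If F has a (finite or infinite) derivative at a nega-Q̃-irrational point x₀, then F′(x₀) = lim_{n→∞} Π_{j=1}^{n} (p̃_{i_j(x₀),j} / q̃_{i_j(x₀),j}), the limit of ratios of increments of F and of lengths over the nested cylinders containing x₀. -/
/-!
The cylinder of rank `n` containing `x₀ = negaVal m q d` is `[aₙ, bₙ]`, where `aₙ` is the value
of the first `n` digits of `d` followed by digits contributing nothing, and
`bₙ - aₙ = ∏_{j ≤ n} q̃_{d_j, j}`. These intervals are nested, so `aₙ ≤ x₀ ≤ bₙ`, and their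
lengths tend to `0`. Both endpoints are values of digit sequences, so `G` maps them to the
corresponding `p`-expressions: `bₙ` is the left endpoint of the cylinder following the one
cut out by the last digit of rank `≤ n` which is not the final one at its level (when there is
no such digit at all, `bₙ = x₀ = 1`, and `G 1 = 1` by continuity). Hence
`∏_{j ≤ n} p̃/q̃ = (G bₙ - G aₙ) / (bₙ - aₙ)`, a slope over intervals around `x₀` shrinking
to it, which tends to the derivative.
-/

open Finset Filter Topology MeasureTheory

noncomputable section

theorem HasDerivWithinAt.tendsto_slope_of_mem_Icc {ι : Type*} {l : Filter ι} {f : ℝ → ℝ}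
    {f' x : ℝ} {s : Set ℝ} (hf : HasDerivWithinAt f f' s x) {a b : ι → ℝ}
    (has : ∀ᶠ n in l, a n ∈ s) (hbs : ∀ᶠ n in l, b n ∈ s)
    (hx : ∀ᶠ n in l, x ∈ Set.Icc (a n) (b n)) (hab : ∀ᶠ n in l, a n < b n)
    (hlen : Tendsto (fun n => b n - a n) l (𝓝 0)) :
    Tendsto (fun n => slope f (a n) (b n)) l (𝓝 f') := by
  have hbound : ∀ c : ι → ℝ, (∀ᶠ n in l, c n ∈ Set.Icc (a n) (b n)) →
      (fun n => c n - x) =O[l] fun n => b n - a n := fun c hc =>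
    Asymptotics.IsBigO.of_bound 1 <| (hc.and hx).mono fun n ⟨hcn, hxn⟩ => by
      rw [one_mul, Real.norm_eq_abs, Real.norm_of_nonneg (by linarith [hxn.1, hxn.2])]
      exact abs_le.2 ⟨by linarith [hcn.1, hxn.2], by linarith [hcn.2, hxn.1]⟩
  have hax := hbound a (hab.mono fun n hn => ⟨le_rfl, hn.le⟩)
  have hbx := hbound b (hab.mono fun n hn => ⟨hn.le, le_rfl⟩)
  have ha : Tendsto a l (𝓝[s] x) :=
    tendsto_nhdsWithin_iff.2 ⟨by simpa using (hax.trans_tendsto hlen).add_const x, has⟩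
  have hb : Tendsto b l (𝓝[s] x) :=
    tendsto_nhdsWithin_iff.2 ⟨by simpa using (hbx.trans_tendsto hlen).add_const x, hbs⟩
  have hrem := (((hf.isLittleO.comp_tendsto hb).trans_isBigO hbx).sub
    ((hf.isLittleO.comp_tendsto ha).trans_isBigO hax)).tendsto_div_nhds_zero
  rw [← zero_add f']
  refine (hrem.add_const f').congr' ?_
  filter_upwards [hab] with n hn
  rw [slope_def_field]
  field_simp [(sub_pos.2 hn).ne']
  simp only [Function.comp_apply, smul_eq_mul]
  ring

/-- The position, counted from the left, of the rank-`n` cylinder of digit `i` within its parent. -/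
def twIdx (m : ℕ → ℕ) (n i : ℕ) : ℕ := if Odd n then i else m n - i

lemma tw_eq_apply_twIdx (m : ℕ → ℕ) (f : ℕ → ℕ → ℝ) (n i : ℕ) :
    tw m f n i = f n (twIdx m n i) := by
  unfold tw twIdx; split_ifs <;> rfl

lemma twIdx_le {m : ℕ → ℕ} {n i : ℕ} (h : i ≤ m n) : twIdx m n i ≤ m n := by
  unfold twIdx; split_ifs <;> omega

lemma tw_rowSum_add_tw (m : ℕ → ℕ) (f : ℕ → ℕ → ℝ) (n i : ℕ) :
    tw m (rowSum f) n i + tw m f n i = rowSum f n (twIdx m n i + 1) := by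
  rw [tw_eq_apply_twIdx, tw_eq_apply_twIdx, rowSum, rowSum, Finset.sum_range_succ]

section Cylinder

variable (m : ℕ → ℕ) (f : ℕ → ℕ → ℝ) (e : ℕ → ℕ)

def negaTerm (j : ℕ) : ℝ :=
  tw m (rowSum f) (j + 1) (e (j + 1)) * ∏ t ∈ Icc 1 j, tw m f t (e t)

def cylProd (n : ℕ) : ℝ := ∏ t ∈ Icc 1 n, tw m f t (e t)

def cylLeft (n : ℕ) : ℝ := ∑ j ∈ range n, negaTerm m f e j

def cylRight (n : ℕ) : ℝ := cylLeft m f e n + cylProd m f e n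

lemma negaVal_eq_tsum : negaVal m f e = ∑' j, negaTerm m f e j := by
  simp only [negaVal, negaShift, negaTerm, zero_add]

@[simp] lemma cylProd_zero : cylProd m f e 0 = 1 := by simp [cylProd]

@[simp] lemma cylLeft_zero : cylLeft m f e 0 = 0 := by simp [cylLeft]

@[simp] lemma cylRight_zero : cylRight m f e 0 = 1 := by simp [cylRight]

lemma cylProd_succ (n : ℕ) :
    cylProd m f e (n + 1) = cylProd m f e n * tw m f (n + 1) (e (n + 1)) :=
  prod_Icc_succ_top (by omega) _

lemma cylLeft_succ (n : ℕ) :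
    cylLeft m f e (n + 1) =
      cylLeft m f e n + tw m (rowSum f) (n + 1) (e (n + 1)) * cylProd m f e n :=
  sum_range_succ _ _

lemma cylRight_succ (n : ℕ) :
    cylRight m f e (n + 1) =
      cylLeft m f e n + rowSum f (n + 1) (twIdx m (n + 1) (e (n + 1)) + 1) * cylProd m f e n := by
  rw [cylRight, cylLeft_succ, cylProd_succ, ← tw_rowSum_add_tw]
  ring

variable {m f e}

lemma cylProd_congr {e' : ℕ → ℕ} {n : ℕ} (h : ∀ t ≤ n, e t = e' t) :
    cylProd m f e n = cylProd m f e' n :=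
  prod_congr rfl fun t ht => by rw [h t (mem_Icc.1 ht).2]

lemma cylLeft_congr {e' : ℕ → ℕ} {n : ℕ} (h : ∀ t ≤ n, e t = e' t) :
    cylLeft m f e n = cylLeft m f e' n := by
  induction n with
  | zero => simp
  | succ n ih =>
    rw [cylLeft_succ, cylLeft_succ, ih fun t ht => h t (by omega), h (n + 1) le_rfl,
      cylProd_congr fun t ht => h t (by omega)]

end Cylinder

section Stochastic

variable {m : ℕ → ℕ} {q : ℕ → ℕ → ℝ} (hq1 : ∀ n i, i ≤ m n → 0 < q n i)
  (hq2 : ∀ n, ∑ i ∈ Finset.range (m n + 1), q n i = 1) {e : ℕ → ℕ} (he : ValidDigits m e)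
include hq1

lemma tw_pos {n i : ℕ} (h : i ≤ m n) : 0 < tw m q n i := by
  rw [tw_eq_apply_twIdx]; exact hq1 _ _ (twIdx_le h)

include hq2 in
lemma rowSum_le_one {n k : ℕ} (hk : k ≤ m n + 1) : rowSum q n k ≤ 1 :=
  hq2 n ▸ sum_le_sum_of_subset_of_nonneg (range_subset_range.2 hk) fun i hi _ =>
    (hq1 n i (Nat.lt_succ_iff.1 (mem_range.1 hi))).le

include he

lemma cylProd_pos (n : ℕ) : 0 < cylProd m q e n :=
  prod_pos fun t _ => tw_pos hq1 (he t)

lemma negaTerm_nonneg (j : ℕ) : 0 ≤ negaTerm m q e j := by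
  refine mul_nonneg ?_ (cylProd_pos hq1 he j).le
  rw [tw_eq_apply_twIdx]
  exact sum_nonneg fun i hi => (hq1 _ _ ((mem_range.1 hi).le.trans (twIdx_le (he _)))).le

lemma monotone_cylLeft : Monotone (cylLeft m q e) :=
  monotone_nat_of_le_succ fun n => by
    unfold cylLeft; rw [sum_range_succ]; exact le_add_of_nonneg_right (negaTerm_nonneg hq1 he n)

lemma cylLeft_le_cylRight (n : ℕ) : cylLeft m q e n ≤ cylRight m q e n :=
  le_add_of_nonneg_right (cylProd_pos hq1 he n).le

include hq2

lemma antitone_cylRight : Antitone (cylRight m q e) := by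
  refine antitone_nat_of_succ_le fun n => ?_
  rw [cylRight_succ, cylRight]
  have := rowSum_le_one hq1 hq2 (Nat.succ_le_succ (twIdx_le (he (n + 1))))
  nlinarith [cylProd_pos hq1 he n]

lemma cylRight_le_one (n : ℕ) : cylRight m q e n ≤ 1 :=
  cylRight_zero m q e ▸ antitone_cylRight hq1 hq2 he (Nat.zero_le n)

lemma hasSum_negaVal : HasSum (negaTerm m q e) (negaVal m q e) := by
  rw [negaVal_eq_tsum]
  exact (summable_of_sum_range_le (negaTerm_nonneg hq1 he) fun n =>
    (cylLeft_le_cylRight hq1 he n).trans (cylRight_le_one hq1 hq2 he n)).hasSum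

lemma tendsto_cylLeft : Tendsto (cylLeft m q e) atTop (𝓝 (negaVal m q e)) :=
  (hasSum_negaVal hq1 hq2 he).tendsto_sum_nat

lemma cylLeft_le_negaVal (n : ℕ) : cylLeft m q e n ≤ negaVal m q e :=
  (monotone_cylLeft hq1 he).ge_of_tendsto (tendsto_cylLeft hq1 hq2 he) n

lemma negaVal_le_cylRight (n : ℕ) : negaVal m q e ≤ cylRight m q e n :=
  le_of_tendsto (tendsto_cylLeft hq1 hq2 he) <| (eventually_ge_atTop n).mono fun _ hN =>
    (cylLeft_le_cylRight hq1 he _).trans (antitone_cylRight hq1 hq2 he hN)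

lemma cylLeft_mem_Icc (n : ℕ) : cylLeft m q e n ∈ Set.Icc (0 : ℝ) 1 :=
  ⟨cylLeft_zero m q e ▸ monotone_cylLeft hq1 he (Nat.zero_le n),
    (cylLeft_le_cylRight hq1 he n).trans (cylRight_le_one hq1 hq2 he n)⟩

lemma cylRight_mem_Icc (n : ℕ) : cylRight m q e n ∈ Set.Icc (0 : ℝ) 1 :=
  ⟨(cylLeft_mem_Icc hq1 hq2 he n).1.trans (cylLeft_le_cylRight hq1 he n),
    cylRight_le_one hq1 hq2 he n⟩

end Stochastic

section Digits

variable {m : ℕ → ℕ}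

def zeroDigit (m : ℕ → ℕ) (t : ℕ) : ℕ := if Odd t then 0 else m t

def zeroExtend (m : ℕ → ℕ) (e : ℕ → ℕ) (n t : ℕ) : ℕ := if t ≤ n then e t else zeroDigit m t

lemma twIdx_zeroDigit (t : ℕ) : twIdx m t (zeroDigit m t) = 0 := by
  unfold twIdx zeroDigit; split_ifs <;> simp

lemma validDigits_zeroExtend {e : ℕ → ℕ} (he : ValidDigits m e) (n : ℕ) :
    ValidDigits m (zeroExtend m e n) := fun t => by
  unfold zeroExtend zeroDigit; split_ifs <;> simp [he t]

lemma negaVal_zeroExtend (f : ℕ → ℕ → ℝ) (e : ℕ → ℕ) (n : ℕ) :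
    negaVal m f (zeroExtend m e n) = cylLeft m f e n := by
  rw [negaVal_eq_tsum, tsum_eq_sum (s := range n) fun j hj => ?_]
  · exact cylLeft_congr fun t ht => if_pos ht
  · rw [negaTerm, zeroExtend, if_neg (by simp at hj; omega), tw_eq_apply_twIdx, twIdx_zeroDigit]
    simp [rowSum]

def nextDigit (n i : ℕ) : ℕ := if Odd n then i + 1 else i - 1

lemma nextDigit_le {n i : ℕ} (hi : i ≤ m n) (h : twIdx m n i < m n) : nextDigit n i ≤ m n := by
  unfold twIdx nextDigit at *; split_ifs at * <;> omega

lemma twIdx_nextDigit {n i : ℕ} (hi : i ≤ m n) (h : twIdx m n i < m n) :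
    twIdx m n (nextDigit n i) = twIdx m n i + 1 := by
  unfold twIdx nextDigit at *; split_ifs at * <;> omega

/-- The digits of the left endpoint of the cylinder of rank `n + 1` that follows the one
of `d`. -/
def nextCylDigits (m : ℕ → ℕ) (d : ℕ → ℕ) (n : ℕ) : ℕ → ℕ :=
  zeroExtend m (Function.update d (n + 1) (nextDigit (n + 1) (d (n + 1)))) (n + 1)

variable {d : ℕ → ℕ} {n : ℕ}

lemma validDigits_nextCylDigits (hd : ValidDigits m d)
    (h : twIdx m (n + 1) (d (n + 1)) < m (n + 1)) : ValidDigits m (nextCylDigits m d n) := by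
  refine validDigits_zeroExtend (fun t => ?_) _
  rcases eq_or_ne t (n + 1) with rfl | ht
  · simpa using nextDigit_le (hd _) h
  · simpa [ht] using hd t

lemma negaVal_nextCylDigits (f : ℕ → ℕ → ℝ) (hd : d (n + 1) ≤ m (n + 1))
    (h : twIdx m (n + 1) (d (n + 1)) < m (n + 1)) :
    negaVal m f (nextCylDigits m d n) = cylRight m f d (n + 1) := by
  have hagree : ∀ t ≤ n, Function.update d (n + 1) (nextDigit (n + 1) (d (n + 1))) t = d t :=
    fun t ht => Function.update_of_ne (by omega) _ _
  rw [nextCylDigits, negaVal_zeroExtend, cylLeft_succ, cylRight_succ, Function.update_self,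
    tw_eq_apply_twIdx, twIdx_nextDigit hd h, cylLeft_congr hagree, cylProd_congr hagree]

variable {f : ℕ → ℕ → ℝ} (hf : ∀ n, ∑ i ∈ Finset.range (m n + 1), f n i = 1)
include hf

lemma cylRight_succ_of_twIdx_eq (h : twIdx m (n + 1) (d (n + 1)) = m (n + 1)) :
    cylRight m f d (n + 1) = cylRight m f d n := by
  rw [cylRight_succ, h, show rowSum f (n + 1) (m (n + 1) + 1) = 1 from hf _, one_mul, cylRight]

lemma cylRight_eq_one (h : ∀ k, 1 ≤ k → k ≤ n → twIdx m k (d k) = m k) :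
    cylRight m f d n = 1 := by
  induction n with
  | zero => simp
  | succ n ih =>
    rw [cylRight_succ_of_twIdx_eq hf (h _ (by omega) le_rfl), ih fun k hk hkn => h k hk (by omega)]

end Digits

lemma exists_validDigits_negaVal_eq_cylRight {m : ℕ → ℕ} {d : ℕ → ℕ} (hd : ValidDigits m d)
    {k n : ℕ} (hk1 : 1 ≤ k) (hkn : k ≤ n) (hk : twIdx m k (d k) < m k) :
    ∃ e, ValidDigits m e ∧ ∀ f : ℕ → ℕ → ℝ, (∀ n, ∑ i ∈ Finset.range (m n + 1), f n i = 1) →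
      negaVal m f e = cylRight m f d n := by
  induction n with
  | zero => omega
  | succ n ih =>
    by_cases h : twIdx m (n + 1) (d (n + 1)) < m (n + 1)
    · exact ⟨_, validDigits_nextCylDigits hd h, fun f _ => negaVal_nextCylDigits f (hd _) h⟩
    · obtain ⟨e, he, hfe⟩ := ih (Nat.le_of_lt_succ (hkn.lt_of_ne fun hkeq => h (hkeq ▸ hk)))
      refine ⟨e, he, fun f hf => ?_⟩
      rw [hfe f hf, cylRight_succ_of_twIdx_eq hf (le_antisymm (twIdx_le (hd _)) (not_lt.1 h))]

lemma tendsto_cylProd_zero {m : ℕ → ℕ} {f : ℕ → ℕ → ℝ}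
    (hf : ∀ d, ValidDigits m d → Tendsto (fun N => ∏ j ∈ Icc 1 N, f j (d j)) atTop (𝓝 0))
    {e : ℕ → ℕ} (he : ValidDigits m e) : Tendsto (cylProd m f e) atTop (𝓝 0) :=
  (hf _ fun t => twIdx_le (he t)).congr fun _ =>
    prod_congr rfl fun t _ => (tw_eq_apply_twIdx m f t (e t)).symm

section Map

variable {m : ℕ → ℕ} {q p : ℕ → ℕ → ℝ} {G : ℝ → ℝ}
  (hG : ∀ d, ValidDigits m d → G (negaVal m q d) = negaVal m p d)
  {d : ℕ → ℕ} (hd : ValidDigits m d)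
include hG hd

lemma map_cylLeft (n : ℕ) : G (cylLeft m q d n) = cylLeft m p d n := by
  simpa only [negaVal_zeroExtend] using hG _ (validDigits_zeroExtend hd n)

variable (hq1 : ∀ n i, i ≤ m n → 0 < q n i) (hq2 : ∀ n, ∑ i ∈ Finset.range (m n + 1), q n i = 1)
  (hp2 : ∀ n, ∑ i ∈ Finset.range (m n + 1), p n i = 1)
  (hq : Tendsto (cylProd m q d) atTop (𝓝 0)) (hp : Tendsto (cylProd m p d) atTop (𝓝 0))
  (hcont : ContinuousWithinAt G (Set.Icc 0 1) (negaVal m q d))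
include hq1 hq2 hp2 hq hp hcont

/-- The series `negaVal m p d` need not converge absolutely (so its `tsum` may be junk), hence
`G 1` is reached by continuity along the left endpoints rather than through `hG`. -/
lemma map_one_of_forall_twIdx_eq (htop : ∀ k, 1 ≤ k → twIdx m k (d k) = m k) : G 1 = 1 := by
  have hleft : ∀ f : ℕ → ℕ → ℝ, (∀ n, ∑ i ∈ Finset.range (m n + 1), f n i = 1) →
      ∀ n, cylLeft m f d n = 1 - cylProd m f d n := fun f hf n =>
    eq_sub_of_add_eq (cylRight_eq_one hf fun k hk _ => htop k hk)
  have hx : negaVal m q d = 1 :=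
    tendsto_nhds_unique (tendsto_cylLeft hq1 hq2 hd) <| by
      simpa using (hq.const_sub 1).congr fun n => (hleft q hq2 n).symm
  have hGx : Tendsto (fun n => G (cylLeft m q d n)) atTop (𝓝 (G (negaVal m q d))) :=
    hcont.tendsto.comp <| tendsto_nhdsWithin_iff.2
      ⟨tendsto_cylLeft hq1 hq2 hd, Eventually.of_forall (cylLeft_mem_Icc hq1 hq2 hd)⟩
  calc G 1 = G (negaVal m q d) := by rw [hx]
    _ = 1 := tendsto_nhds_unique hGx <| by
      simpa [map_cylLeft hG hd, hleft p hp2] using hp.const_sub 1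

lemma eventually_map_cylRight : ∀ᶠ n in atTop, G (cylRight m q d n) = cylRight m p d n := by
  by_cases h : ∃ k, 1 ≤ k ∧ twIdx m k (d k) < m k
  · obtain ⟨k, hk1, hk⟩ := h
    filter_upwards [eventually_ge_atTop k] with n hkn
    obtain ⟨e, he, hfe⟩ := exists_validDigits_negaVal_eq_cylRight hd hk1 hkn hk
    rw [← hfe q hq2, hG e he, hfe p hp2]
  · push Not at h
    have htop : ∀ k, 1 ≤ k → twIdx m k (d k) = m k := fun k hk =>
      le_antisymm (twIdx_le (hd k)) (h k hk)
    refine Eventually.of_forall fun n => ?_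
    rw [cylRight_eq_one hq2 fun k hk _ => htop k hk, cylRight_eq_one hp2 fun k hk _ => htop k hk,
      map_one_of_forall_twIdx_eq hG hd hq1 hq2 hp2 hq hp hcont htop]

end Map

theorem stmt12_general (m : ℕ → ℕ) (q p : ℕ → ℕ → ℝ)
    (hq1 : ∀ n i, i ≤ m n → 0 < q n i)
    (hq2 : ∀ n, ∑ i ∈ Finset.range (m n + 1), q n i = 1)
    (hq4 : ∀ d, ValidDigits m d →
      Tendsto (fun N => ∏ j ∈ Finset.Icc 1 N, q j (d j)) atTop (𝓝 0))
    (hp2 : ∀ n, ∑ i ∈ Finset.range (m n + 1), p n i = 1)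
    (hp4 : ∀ d, ValidDigits m d →
      Tendsto (fun N => ∏ j ∈ Finset.Icc 1 N, |p j (d j)|) atTop (𝓝 0))
    (G : ℝ → ℝ)
    (hG : ∀ d, ValidDigits m d → G (negaVal m q d) = negaVal m p d)
    (d : ℕ → ℕ) (hd : ValidDigits m d)
    (L : ℝ)
    (hderiv : HasDerivWithinAt G L (Set.Icc (0 : ℝ) 1) (negaVal m q d)) :
    Tendsto (fun n : ℕ => ∏ j ∈ Finset.Icc 1 n, tw m p j (d j) / tw m q j (d j))
      atTop (𝓝 L) := by
  have hq : Tendsto (cylProd m q d) atTop (𝓝 0) := tendsto_cylProd_zero hq4 hd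
  have hp : Tendsto (cylProd m p d) atTop (𝓝 0) := tendsto_cylProd_zero (fun e he =>
    (tendsto_zero_iff_abs_tendsto_zero _).2 <| by
      simpa only [Function.comp_def, abs_prod] using hp4 e he) hd
  have hslope := hderiv.tendsto_slope_of_mem_Icc
    (Eventually.of_forall (cylLeft_mem_Icc hq1 hq2 hd))
    (Eventually.of_forall (cylRight_mem_Icc hq1 hq2 hd))
    (Eventually.of_forall fun n =>
      ⟨cylLeft_le_negaVal hq1 hq2 hd n, negaVal_le_cylRight hq1 hq2 hd n⟩)
    (Eventually.of_forall fun n => lt_add_of_pos_right _ (cylProd_pos hq1 hd n))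
    (by simpa [cylRight] using hq)
  refine hslope.congr' ?_
  filter_upwards [eventually_map_cylRight hG hd hq1 hq2 hp2 hq hp hderiv.continuousWithinAt]
    with n hn
  rw [slope_def_field, hn, map_cylLeft hG hd, prod_div_distrib]
  simp [cylRight, cylProd]

/-- if `F` has a derivative at a nega-`Q̃`-irrational point `x₀`, then this
derivative equals `lim_n Π_{j≤n} (p̃_{i_j(x₀),j} / q̃_{i_j(x₀),j})`. -/
theorem stmt12 (m : ℕ → ℕ) (q p : ℕ → ℕ → ℝ)
    (hq1 : ∀ n i, i ≤ m n → 0 < q n i)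
    (hq2 : ∀ n, ∑ i ∈ Finset.range (m n + 1), q n i = 1)
    (hq4 : ∀ d, ValidDigits m d →
      Tendsto (fun N => ∏ j ∈ Finset.Icc 1 N, q j (d j)) atTop (𝓝 0))
    (hp1 : ∀ n i, i ≤ m n → p n i ∈ Set.Ioo (-1 : ℝ) 1)
    (hp2 : ∀ n, ∑ i ∈ Finset.range (m n + 1), p n i = 1)
    (hp3 : ∀ n k, 1 ≤ k → k ≤ m n → rowSum p n k ∈ Set.Ioo (0 : ℝ) 1)
    (hp4 : ∀ d, ValidDigits m d →
      Tendsto (fun N => ∏ j ∈ Finset.Icc 1 N, |p j (d j)|) atTop (𝓝 0))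
    (G : ℝ → ℝ)
    (hG : ∀ d, ValidDigits m d → G (negaVal m q d) = negaVal m p d)
    (hsurj : ∀ x ∈ Set.Icc (0 : ℝ) 1, ∃ d, ValidDigits m d ∧ x = negaVal m q d)
    (d : ℕ → ℕ) (hd : ValidDigits m d)
    -- `x₀ := negaVal m q d` is nega-`Q̃`-irrational: its representation is unique
    (hirr : ∀ d', ValidDigits m d' → negaVal m q d' = negaVal m q d →
      ∀ n, 1 ≤ n → d' n = d n)
    (L : ℝ)
    (hderiv : HasDerivWithinAt G L (Set.Icc (0 : ℝ) 1) (negaVal m q d)) :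
    Tendsto (fun n : ℕ => ∏ j ∈ Finset.Icc 1 n, tw m p j (d j) / tw m q j (d j))
      atTop (𝓝 L) :=
  stmt12_general m q p hq1 hq2 hq4 hp2 hp4 G hG d hd L hderiv
end
end
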